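/- Let μ be a measure on ℝ^d, θ0 ∈ ℝ^d, and let h0 : ℝ^d → ℝ be μ-integrable. Suppose h0 satisfies the sign-alignment condition at x with respect to θ0 for μ-almost every x. Then for every θ ∈ ℝ^d, the Manski maximum score criterion satisfies ∫ h0(x)·1{⟪x,θ⟫ > 0} dμ(x) ≤ ∫ max(h0(x), 0) dμ(x) = ∫ h0(x)·1{⟪x,θ0⟫ > 0} dμ(x); that is, θ0 maximizes the maximum score population criterion Q_MS(θ) := ∫ h0(x)·1{⟪x,θ⟫ > 0} dμ(x). -/

import Mathlib

open MeasureTheory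
open scoped RealInnerProductSpace

/-- `h0` satisfies the sign-alignment condition at `x` with respect to `θ0`:
`h0(x) > 0 ↔ ⟪x,θ0⟫ > 0` and `h0(x) < 0 ↔ ⟪x,θ0⟫ < 0`. -/
def SignAlign {d : ℕ} (θ0 : EuclideanSpace ℝ (Fin d))
    (h0 : EuclideanSpace ℝ (Fin d) → ℝ) (x : EuclideanSpace ℝ (Fin d)) : Prop :=
  (0 < h0 x ↔ 0 < ⟪x, θ0⟫) ∧ (h0 x < 0 ↔ ⟪x, θ0⟫ < 0)

section PositivePart

variable {α : Type*} [MeasurableSpace α] {μ : Measure α} {f : α → ℝ} {p : α → Prop}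
  [DecidablePred p]

theorem integral_ite_le_integral_max_zero (hf : Integrable f μ) (hp : MeasurableSet {x | p x}) :
    ∫ x, (if p x then f x else 0) ∂μ ≤ ∫ x, max (f x) 0 ∂μ := by
  have hint : Integrable (fun x => if p x then f x else 0) μ :=
    (hf.indicator hp).congr (.of_forall fun x => by simp [Set.indicator_apply])
  refine integral_mono hint hf.pos_part fun x => ?_
  split_ifs
  · exact le_max_left _ _
  · exact le_max_right _ _

theorem integral_max_zero_eq_integral_ite_of_ae_pos_iff (h : ∀ᵐ x ∂μ, 0 < f x ↔ p x) :
    ∫ x, max (f x) 0 ∂μ = ∫ x, (if p x then f x else 0) ∂μ := by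
  refine integral_congr_ae ?_
  filter_upwards [h] with x hx
  split_ifs with hpx
  · exact max_eq_left (hx.mpr hpx).le
  · exact max_eq_right (not_lt.mp (mt hx.mp hpx))

end PositivePart

/-- `θ0` maximizes Manski's maximum score population criterion
`Q_MS(θ) = ∫ h0(x)·1{⟪x,θ⟫ > 0} dμ(x)`, whose maximal value is `∫ max(h0, 0) dμ`. -/
theorem manski_ms_population_max {d : ℕ} (μ : Measure (EuclideanSpace ℝ (Fin d)))
    (θ0 : EuclideanSpace ℝ (Fin d)) (h0 : EuclideanSpace ℝ (Fin d) → ℝ)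
    (hint : Integrable h0 μ) (hsa : ∀ᵐ x ∂μ, SignAlign θ0 h0 x) :
    ∀ θ : EuclideanSpace ℝ (Fin d),
      (∫ x, (if 0 < ⟪x, θ⟫ then h0 x else 0) ∂μ) ≤ (∫ x, max (h0 x) 0 ∂μ) ∧
      (∫ x, max (h0 x) 0 ∂μ) = ∫ x, (if 0 < ⟪x, θ0⟫ then h0 x else 0) ∂μ := by
  intro θ
  exact ⟨integral_ite_le_integral_max_zero hint (measurableSet_lt measurable_const (by fun_prop)),
    integral_max_zero_eq_integral_ite_of_ae_pos_iff (hsa.mono fun _ hx => hx.1)⟩
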